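/- Let n ≥ 1, let 𝒪 and 𝒪' be bounded open subsets of ℝⁿ with 𝒪' ⊆ 𝒪, and let u : ℝⁿ → ℝ be measurable and vanish almost everywhere on 𝒪 ∖ 𝒪'. Then ∬_{𝒪×𝒪} |u(x)−u(y)|²/|x−y|^{n+1} dx dy ≤ ∬_{𝒪'×𝒪'} |u(x)−u(y)|²/|x−y|^{n+1} dx dy + 2 ω_n ∫_{𝒪'} |u(x)|²/dist(x,∂𝒪') dx. -/

import Mathlib

/-! Split `O = O' ∪ (O \ O')`. Since `u = 0` on `O \ O'`, the square over `O \ O'` contributes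
nothing, and by symmetry the two mixed terms both equal
`∫_{O'} u(x)² ∫_{O \ O'} |x - y|^{-(n+1)} dy dx`.
For `x ∈ O'` the inner integral only sees points at distance at least `d = dist(x, ∂O')` from `x`,
and in polar coordinates `∫_{|y - x| ≥ d} |x - y|^{-(n+1)} dy = ω_n ∫_d^∞ r^{-2} dr = ω_n / d`. -/

open MeasureTheory Metric Set ENNReal

/-- The surface area `ω_n` of the unit sphere in `ℝⁿ`, as an extended nonnegative real. -/
noncomputable def surfaceAreaUnitSphere (n : ℕ) : ℝ≥0∞ :=
  (n : ℝ≥0∞) * volume (Metric.ball (0 : EuclideanSpace ℝ (Fin n)) 1)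

theorem lintegral_Ioi_rpow_of_lt {a : ℝ} (ha : a < -1) {c : ℝ} (hc : 0 < c) :
    ∫⁻ t in Ioi c, ENNReal.ofReal (t ^ a) = ENNReal.ofReal (-c ^ (a + 1) / (a + 1)) := by
  rw [← ofReal_integral_eq_lintegral_ofReal (integrableOn_Ioi_rpow_of_lt ha hc),
    integral_Ioi_rpow_of_lt ha hc]
  filter_upwards [ae_restrict_mem measurableSet_Ioi] with t ht
  exact Real.rpow_nonneg (hc.trans ht).le a

section

variable {E : Type*} [NormedAddCommGroup E] [NormedSpace ℝ E] [MeasurableSpace E]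
  (μ : Measure E) [FiniteDimensional ℝ E] [BorelSpace E] [μ.IsAddHaarMeasure]

theorem lintegral_fun_norm_addHaar [Nontrivial E] {f : ℝ → ℝ≥0∞} (hf : Measurable f) :
    ∫⁻ x, f ‖x‖ ∂μ = Module.finrank ℝ E * μ (ball 0 1) *
      ∫⁻ r in Ioi (0 : ℝ), ENNReal.ofReal (r ^ (Module.finrank ℝ E - 1)) * f r :=
  calc ∫⁻ x, f ‖x‖ ∂μ = ∫⁻ x : ({(0 : E)}ᶜ : Set E), f ‖x.1‖ ∂(μ.comap (↑)) := by
        rw [lintegral_subtype_comap (measurableSet_singleton _).compl fun x ↦ f ‖x‖,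
          restrict_compl_singleton]
    _ = ∫⁻ p, f p.2 ∂(μ.toSphere.prod (.volumeIoiPow (Module.finrank ℝ E - 1))) := by
        simpa using μ.measurePreserving_homeomorphUnitSphereProd.lintegral_comp_emb
          (Homeomorph.measurableEmbedding _) (f ∘ Subtype.val ∘ Prod.snd)
    _ = μ.toSphere univ * ∫⁻ r, f r ∂(.volumeIoiPow (Module.finrank ℝ E - 1)) := by
        rw [lintegral_prod (fun p : sphere (0 : E) 1 × Ioi (0 : ℝ) ↦ f p.2)
          (hf.comp (measurable_subtype_coe.comp measurable_snd)).aemeasurable]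
        dsimp only
        rw [lintegral_const, mul_comm]
    _ = _ := by
        rw [Measure.toSphere_apply_univ, Measure.volumeIoiPow,
          lintegral_withDensity_eq_lintegral_mul _ (by fun_prop) (g := fun r : Ioi (0 : ℝ) ↦ f r)
            (hf.comp measurable_subtype_coe)]
        exact congrArg _ (lintegral_subtype_comap measurableSet_Ioi
          fun r ↦ ENNReal.ofReal (r ^ (Module.finrank ℝ E - 1)) * f r)

theorem lintegral_compl_ball_inv_dist_pow (x : E) {d : ℝ} (hd : 0 < d) :
    ∫⁻ y in (ball x d)ᶜ, ENNReal.ofReal ((dist x y ^ (Module.finrank ℝ E + 1))⁻¹) ∂μ =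
      Module.finrank ℝ E * μ (ball 0 1) * ENNReal.ofReal d⁻¹ := by
  rcases subsingleton_or_nontrivial E with hE | hE
  · have : (ball x d)ᶜ = ∅ := by simp [Subsingleton.eq_univ_of_nonempty ⟨x, mem_ball_self hd⟩]
    simp [this, Module.finrank_zero_of_subsingleton]
  set k := Module.finrank ℝ E
  let g : ℝ → ℝ≥0∞ := (Ici d).indicator fun r ↦ ENNReal.ofReal ((r ^ (k + 1))⁻¹)
  have hg : Measurable g := (by fun_prop : Measurable fun r : ℝ ↦ _).indicator measurableSet_Ici
  calc ∫⁻ y in (ball x d)ᶜ, ENNReal.ofReal ((dist x y ^ (k + 1))⁻¹) ∂μ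
      = ∫⁻ y, g ‖y - x‖ ∂μ := by
        rw [← lintegral_indicator measurableSet_ball.compl]
        congr 1 with y
        simp [g, indicator, dist_comm x y, dist_eq_norm]
    _ = k * μ (ball 0 1) * ∫⁻ r in Ioi 0, ENNReal.ofReal (r ^ (k - 1)) * g r := by
        rw [lintegral_sub_right_eq_self (fun y ↦ g ‖y‖), lintegral_fun_norm_addHaar μ hg]
    _ = k * μ (ball 0 1) * ∫⁻ r in Ioi d, ENNReal.ofReal (r ^ (-2 : ℝ)) := by
        have hk : 1 ≤ k := Module.finrank_pos
        have hpow : ∀ r : ℝ, 0 < r → r ^ (k - 1) * (r ^ (k + 1))⁻¹ = r ^ (-2 : ℝ) := by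
          intro r hr
          rw [Real.rpow_neg hr.le, show k + 1 = k - 1 + 2 by omega, pow_add]
          norm_cast
          field_simp
        congr 1
        rw [Measure.restrict_congr_set (Ioi_ae_eq_Ici (a := d)),
          ← inter_eq_left.2 (Ici_subset_Ioi.2 hd), ← Measure.restrict_restrict measurableSet_Ici,
          ← lintegral_indicator measurableSet_Ici]
        refine setLIntegral_congr_fun measurableSet_Ioi fun r hr ↦ ?_
        by_cases hrd : r ∈ Ici d
        · simp only [g, indicator_of_mem hrd, ← ENNReal.ofReal_mul (pow_nonneg hr.out.le _),
            hpow r hr]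
        · simp only [g, indicator_of_notMem hrd, mul_zero]
    _ = k * μ (ball 0 1) * ENNReal.ofReal d⁻¹ := by
        rw [lintegral_Ioi_rpow_of_lt (by norm_num) hd]
        norm_num [Real.rpow_neg_one]

theorem setLIntegral_div_dist_pow_le {s : Set E} {x : E} (hx : x ∉ closure s) {c : ℝ}
    (hc : 0 ≤ c) :
    ∫⁻ y in s, ENNReal.ofReal (c / dist x y ^ (Module.finrank ℝ E + 1)) ∂μ ≤
      Module.finrank ℝ E * μ (ball 0 1) * ENNReal.ofReal (c / infDist x s) := by
  rcases s.eq_empty_or_nonempty with rfl | hs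
  · simp
  have hd : 0 < infDist x s := (infDist_pos_iff_notMem_closure hs).1 hx
  have hs_sub : s ⊆ (ball x (infDist x s))ᶜ := fun y hy ↦ by
    rw [mem_compl_iff, mem_ball, not_lt, dist_comm]
    exact infDist_le_dist_of_mem hy
  calc ∫⁻ y in s, ENNReal.ofReal (c / dist x y ^ (Module.finrank ℝ E + 1)) ∂μ
      ≤ ∫⁻ y in (ball x (infDist x s))ᶜ,
          ENNReal.ofReal c * ENNReal.ofReal ((dist x y ^ (Module.finrank ℝ E + 1))⁻¹) ∂μ := by
        simp_rw [← ENNReal.ofReal_mul hc, ← div_eq_mul_inv]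
        exact lintegral_mono_set hs_sub
    _ = Module.finrank ℝ E * μ (ball 0 1) * ENNReal.ofReal (c / infDist x s) := by
        rw [lintegral_const_mul' _ _ ofReal_ne_top, lintegral_compl_ball_inv_dist_pow μ x hd,
          div_eq_mul_inv, ENNReal.ofReal_mul hc]
        ring

end

theorem lintegral_lintegral_union_of_symm {α : Type*} [MeasurableSpace α] {μ : Measure α}
    [SFinite μ] {K : α → α → ℝ≥0∞} (hK : Measurable (Function.uncurry K))
    (hsymm : ∀ x y, K x y = K y x) {A B : Set α} (hA : MeasurableSet A) (hAB : Disjoint A B) :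
    ∫⁻ x in A ∪ B, ∫⁻ y in A ∪ B, K x y ∂μ ∂μ =
      ∫⁻ x in A, ∫⁻ y in A, K x y ∂μ ∂μ + 2 * ∫⁻ x in A, ∫⁻ y in B, K x y ∂μ ∂μ +
        ∫⁻ x in B, ∫⁻ y in B, K x y ∂μ ∂μ := by
  have hswap : ∫⁻ x in B, ∫⁻ y in A, K x y ∂μ ∂μ = ∫⁻ x in A, ∫⁻ y in B, K x y ∂μ ∂μ := by
    rw [lintegral_lintegral_swap hK.aemeasurable]
    simp_rw [hsymm]
  have hinner (S : Set α) : Measurable fun x ↦ ∫⁻ y in S, K x y ∂μ := hK.lintegral_prod_right'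
  simp_rw [Measure.restrict_union' hAB hA, lintegral_add_measure]
  rw [lintegral_add_left (hinner A), lintegral_add_left (hinner A), hswap]
  ring

theorem setLIntegral_div_dist_pow_le_surfaceAreaUnitSphere {n : ℕ}
    {s : Set (EuclideanSpace ℝ (Fin n))} {x : EuclideanSpace ℝ (Fin n)} (hx : x ∉ closure s)
    {c : ℝ} (hc : 0 ≤ c) :
    ∫⁻ y in s, ENNReal.ofReal (c / dist x y ^ (n + 1)) ≤
      surfaceAreaUnitSphere n * ENNReal.ofReal (c / infDist x s) := by
  simpa [surfaceAreaUnitSphere, finrank_euclideanSpace_fin] using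
    setLIntegral_div_dist_pow_le volume hx hc

theorem gagliardo_half_le_general (n : ℕ)
    (O O' : Set (EuclideanSpace ℝ (Fin n)))
    (hO' : IsOpen O') (hsub : O' ⊆ O)
    (u : EuclideanSpace ℝ (Fin n) → ℝ) (hu : Measurable u)
    (hzero : ∀ᵐ x ∂(volume.restrict (O \ O')), u x = 0) :
    (∫⁻ x in O, ∫⁻ y in O, ENNReal.ofReal ((u x - u y) ^ 2 / dist x y ^ (n + 1))) ≤
      (∫⁻ x in O', ∫⁻ y in O', ENNReal.ofReal ((u x - u y) ^ 2 / dist x y ^ (n + 1))) +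
        2 * surfaceAreaUnitSphere n *
          ∫⁻ x in O', ENNReal.ofReal ((u x) ^ 2 / infDist x O'ᶜ) := by
  set K := fun x y ↦ ENNReal.ofReal ((u x - u y) ^ 2 / dist x y ^ (n + 1))
  have hK : Measurable (Function.uncurry K) := by fun_prop
  have hsplit := lintegral_lintegral_union_of_symm (μ := volume) hK
    (fun x y ↦ by simp only [K, dist_comm x y, ← neg_sub (u y), neg_sq]) hO'.measurableSet
    (disjoint_sdiff_self_right : Disjoint O' (O \ O'))
  rw [union_sdiff_cancel hsub] at hsplit
  have hdiag : ∫⁻ x in O \ O', ∫⁻ y in O \ O', K x y = 0 := by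
    refine (lintegral_congr_ae ?_).trans lintegral_zero
    filter_upwards [hzero] with x hx
    refine (lintegral_congr_ae ?_).trans lintegral_zero
    filter_upwards [hzero] with y hy
    simp [K, hx, hy]
  have hcross : ∫⁻ x in O', ∫⁻ y in O \ O', K x y ≤
      surfaceAreaUnitSphere n * ∫⁻ x in O', ENNReal.ofReal ((u x) ^ 2 / infDist x O'ᶜ) := by
    rw [← lintegral_const_mul _ (by fun_prop)]
    refine setLIntegral_mono' hO'.measurableSet fun x hx ↦ ?_
    have hx' : x ∉ closure O'ᶜ := by rwa [hO'.isClosed_compl.closure_eq, notMem_compl_iff]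
    calc ∫⁻ y in O \ O', K x y = ∫⁻ y in O \ O', ENNReal.ofReal (u x ^ 2 / dist x y ^ (n + 1)) :=
          lintegral_congr_ae (hzero.mono fun y hy ↦ by simp [K, hy])
      _ ≤ ∫⁻ y in O'ᶜ, ENNReal.ofReal (u x ^ 2 / dist x y ^ (n + 1)) :=
          lintegral_mono_set fun y hy ↦ hy.2
      _ ≤ _ := setLIntegral_div_dist_pow_le_surfaceAreaUnitSphere hx' (sq_nonneg _)
  rw [hsplit, hdiag, add_zero, mul_assoc]
  gcongr

/-- If `u` vanishes a.e. on `O ∖ O'` for bounded open sets `O' ⊆ O ⊆ ℝⁿ`, then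
`∬_{O×O} |u(x)−u(y)|²/|x−y|^{n+1} ≤ ∬_{O'×O'} |u(x)−u(y)|²/|x−y|^{n+1}
  + 2 ω_n ∫_{O'} |u(x)|²/dist(x,∂O') dx`. -/
theorem gagliardo_half_le (n : ℕ) (hn : 1 ≤ n)
    (O O' : Set (EuclideanSpace ℝ (Fin n)))
    (hO : IsOpen O) (hObdd : Bornology.IsBounded O)
    (hO' : IsOpen O') (hO'bdd : Bornology.IsBounded O') (hsub : O' ⊆ O)
    (u : EuclideanSpace ℝ (Fin n) → ℝ) (hu : Measurable u)
    (hzero : ∀ᵐ x ∂(volume.restrict (O \ O')), u x = 0) :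
    (∫⁻ x in O, ∫⁻ y in O, ENNReal.ofReal ((u x - u y) ^ 2 / dist x y ^ (n + 1))) ≤
      (∫⁻ x in O', ∫⁻ y in O', ENNReal.ofReal ((u x - u y) ^ 2 / dist x y ^ (n + 1))) +
        2 * surfaceAreaUnitSphere n *
          ∫⁻ x in O', ENNReal.ofReal ((u x) ^ 2 / infDist x O'ᶜ) :=
  gagliardo_half_le_general n O O' hO' hsub u hu hzero
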